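/- Every string accepted by a weighted automaton A is accepted by the automaton A' produced by R-pre-disambiguation of A. -/
import Mathlib


/-- A weighted finite automaton over alphabet `α` with weights in `S` and states `Q`:
initial states `I`, final states `F`, transitions `E ⊆ Q × Σ × S × Q`,
initial weight function `lam` and final weight function `rho`. -/
structure WFA (α S Q : Type) where
  I : Finset Q
  F : Finset Q
  E : Finset (Q × α × S × Q)
  lam : Q → S
  rho : Q → S

namespace WFA

variable {α S Q : Type}

/-- `PathTo A p x q` holds iff there is a path in `A` from `p` to `q` labeled with `x`. -/
inductive PathTo (A : WFA α S Q) : Q → List α → Q → Prop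
  | nil (q : Q) : PathTo A q [] q
  | cons {p : Q} {a : α} {w : S} {q r : Q} {x : List α} :
      (p, a, w, q) ∈ A.E → PathTo A q x r → PathTo A p (a :: x) r

/-- The common-future relation `R*`: `q` and `q'` share a common future, i.e. some
string `x` labels a path from `q` to a final state and a path from `q'` to a final state. -/
def CF (A : WFA α S Q) (q q' : Q) : Prop :=
  ∃ x f f', f ∈ A.F ∧ f' ∈ A.F ∧ A.PathTo q x f ∧ A.PathTo q' x f'

/-- A state is accessible if reachable from some initial state. -/
def Accessible (A : WFA α S Q) (q : Q) : Prop := ∃ x i, i ∈ A.I ∧ A.PathTo i x q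

/-- A state is coaccessible if some final state is reachable from it. -/
def Coaccessible (A : WFA α S Q) (q : Q) : Prop := ∃ x f, f ∈ A.F ∧ A.PathTo q x f

/-- A WFA is trim if every state is accessible and coaccessible. -/
def Trim (A : WFA α S Q) : Prop := ∀ q : Q, A.Accessible q ∧ A.Coaccessible q

/-- A relation `R` on states is compatible with the inverse transition function if
`q R q'`, `q ∈ δ(p, x)` and `q' ∈ δ(p', x)` imply `p R p'`. -/
def Compatible (A : WFA α S Q) (R : Q → Q → Prop) : Prop :=
  ∀ p p' q q' : Q, ∀ x : List α, R q q' → A.PathTo p x q → A.PathTo p' x q' → R p p'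

/-- A relation `R` is coarser than the common-future relation `R*`. -/
def Coarser (A : WFA α S Q) (R : Q → Q → Prop) : Prop :=
  ∀ q q' : Q, A.CF q q' → R q q'

/-- Admissible relations: compatible with the inverse transition function and
coarser than the common-future relation. -/
def Admissible (A : WFA α S Q) (R : Q → Q → Prop) : Prop :=
  A.Compatible R ∧ A.Coarser R

end WFA

namespace WFA

variable {α S Q : Type} [DecidableEq Q] [DecidableEq α] [Semiring S]

/-- One-step transition function on sets of states: `δ(U, a)`. -/
def dstep (A : WFA α S Q) (U : Finset Q) (a : α) : Finset Q :=
  (A.E.filter (fun e => e.1 ∈ U ∧ e.2.1 = a)).image (fun e => e.2.2.2)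

/-- `reach A U x` is `δ(U, x)`, the set of states reached from `U` by paths labeled `x`. -/
def reach (A : WFA α S Q) : Finset Q → List α → Finset Q
  | U, [] => U
  | U, a :: x => A.reach (A.dstep U a) x

/-- `W A p x V` is `W(p, x, V)`, the `⊕`-sum of the weights of all paths from `p`
to a state of `V` labeled with `x`. -/
def W (A : WFA α S Q) : Q → List α → Finset Q → S
  | p, [], V => if p ∈ V then 1 else 0
  | p, a :: x, V =>
      ∑ e ∈ A.E.filter (fun e => e.1 = p ∧ e.2.1 = a), e.2.2.1 * A.W e.2.2.2 x V

/-- `WI A x V` is `W_I(x, V)`, including initial weights. -/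
def WI (A : WFA α S Q) (x : List α) (V : Finset Q) : S :=
  ∑ i ∈ A.I, A.lam i * A.W i x V

/-- The weight `A(x)` associated by the WFA `A` to the string `x`. -/
def val (A : WFA α S Q) (x : List α) : S :=
  ∑ i ∈ A.I, A.lam i * ∑ f ∈ A.F, A.W i x {f} * A.rho f

/-- `δ_q(I, x)`: the states of `δ(I, x)` that are in relation `R` with `q`. -/
def deltaR (A : WFA α S Q) (R : Q → Q → Prop) [DecidableRel R]
    (x : List α) (q : Q) : Finset Q :=
  (A.reach A.I x).filter (fun p => R p q)

/-- The weight component of the weighted subset `s(x, q)`: residual weights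
`w_p = W_I(x, δ_q(I,x))⁻¹ ⊗ W_I(x, p)` for `p ∈ δ_q(I, x)` (and `0̄` elsewhere),
computed with the left-division operation `inv` of the weakly left divisible semiring. -/
def sfun (A : WFA α S Q) (R : Q → Q → Prop) [DecidableRel R] (inv : S → S → S)
    (x : List α) (q : Q) : Q → S :=
  fun p => if p ∈ A.deltaR R x q then inv (A.WI x (A.deltaR R x q)) (A.WI x {p}) else 0

end WFA

/-- States of the pre-disambiguated automaton `A'`: a head state together with a
weighted subset, represented as a pair of a finite state set and a weight function. -/
abbrev QP (α S Q : Type) := Q × Finset Q × (Q → S)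

namespace WFA

variable {α S Q : Type} [DecidableEq Q] [DecidableEq α] [Semiring S]

/-- The state `(q, s(x, q))` of `A'`. -/
def mkState (A : WFA α S Q) (R : Q → Q → Prop) [DecidableRel R] (inv : S → S → S)
    (x : List α) (q : Q) : QP α S Q :=
  (q, A.deltaR R x q, A.sfun R inv x q)

/-- The states of the `R`-pre-disambiguation `A'` of `A`. -/
def IsState' (A : WFA α S Q) (R : Q → Q → Prop) [DecidableRel R] (inv : S → S → S)
    (st : QP α S Q) : Prop :=
  ∃ x : List α, st.1 ∈ A.reach A.I x ∧ st = A.mkState R inv x st.1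

/-- Transitions of the `R`-pre-disambiguation `A'` of `A`: there is a transition from
`(q, s(x,q))` to `(q', s(xa,q'))` labeled `a` whenever `q' ∈ δ(q, a)`, with weight
`w = ⊕ᵢ wᵢ ⊗ W(pᵢ, a, Set(s'))`. -/
def Estep (A : WFA α S Q) (R : Q → Q → Prop) [DecidableRel R] (inv : S → S → S)
    (st st' : QP α S Q) (a : α) (w : S) : Prop :=
  ∃ (x : List α) (q q' : Q),
    q ∈ A.reach A.I x ∧ st = A.mkState R inv x q ∧
    q' ∈ A.dstep {q} a ∧ st' = A.mkState R inv (x ++ [a]) q' ∧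
    w = ∑ p ∈ st.2.1, st.2.2 p * A.W p [a] st'.2.1

/-- The initial weight function `λ'` of `A'`. -/
def lam' (A : WFA α S Q) (st : QP α S Q) : S := ∑ p ∈ st.2.1, A.lam p

/-- The final weight function `ρ'` of `A'`. -/
def rho' (A : WFA α S Q) (st : QP α S Q) : S :=
  ∑ p ∈ st.2.1.filter (fun p => p ∈ A.F), st.2.2 p * A.rho p

/-- Paths in `A'` together with their weights. -/
inductive Path' (A : WFA α S Q) (R : Q → Q → Prop) [DecidableRel R] (inv : S → S → S) :
    QP α S Q → List α → S → QP α S Q → Prop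
  | nil (st : QP α S Q) : Path' A R inv st [] 1 st
  | cons {st st' st'' : QP α S Q} {a : α} {x : List α} {w w' : S} :
      A.Estep R inv st st' a w → Path' A R inv st' x w' st'' →
      Path' A R inv st (a :: x) (w * w') st''

/-- Reachability in `A'`: `st` is reached from an initial state of `A'` by a path labeled `x`. -/
def Reach' (A : WFA α S Q) (R : Q → Q → Prop) [DecidableRel R] (inv : S → S → S)
    (x : List α) (st : QP α S Q) : Prop :=
  ∃ q₀ ∈ A.I, ∃ w : S, Path' A R inv (A.mkState R inv [] q₀) x w st

/-- Weak left divisibility of the semiring. -/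
def WeaklyLeftDivisible (S : Type) [Semiring S] : Prop :=
  ∀ x x' : S, x + x' ≠ 0 → ∃ z : S, x = (x + x') * z

/-- Cancellativity of the semiring multiplication. -/
def Cancellative (S : Type) [Semiring S] : Prop :=
  ∀ x x' z : S, z ≠ 0 → x * z = x' * z → x = x'

/-- `inv` is a left-division operation: `inv d w` is a `z` with `w = d ⊗ z` whenever
such a factorization exists. -/
def IsLeftDiv (S : Type) [Semiring S] (inv : S → S → S) : Prop :=
  ∀ d w : S, (∃ z : S, w = d * z) → w = d * inv d w

end WFA

namespace WFA

variable {α S Q : Type} [DecidableEq Q] [DecidableEq α] [Semiring S]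

lemma mem_dstep {A : WFA α S Q} {U : Finset Q} {p a w q} (hp : p ∈ U)
    (he : (p, a, w, q) ∈ A.E) : q ∈ A.dstep U a := by
  simp only [dstep, Finset.mem_image, Finset.mem_filter]
  exact ⟨(p, a, w, q), ⟨he, hp, rfl⟩, rfl⟩

lemma mem_reach {A : WFA α S Q} {p q : Q} {x : List α} (h : A.PathTo p x q)
    {U : Finset Q} (hp : p ∈ U) : q ∈ A.reach U x := by
  induction h generalizing U with
  | nil q => exact hp
  | cons he _ ih => exact ih (mem_dstep hp he)

lemma reach_append (A : WFA α S Q) (U : Finset Q) (y z : List α) :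
    A.reach U (y ++ z) = A.reach (A.reach U y) z := by
  induction y generalizing U with
  | nil => rfl
  | cons a y ih => simp [reach, ih]

lemma path'_of_pathTo {A : WFA α S Q} {R : Q → Q → Prop} [DecidableRel R] {inv : S → S → S}
    {q f : Q} {x : List α} (h : A.PathTo q x f) :
    ∀ y : List α, q ∈ A.reach A.I y →
      ∃ w : S, Path' A R inv (A.mkState R inv y q) x w (A.mkState R inv (y ++ x) f) := by
  induction h with
  | nil q =>
    intro y _
    exact ⟨1, by simpa using Path'.nil (A.mkState R inv y q)⟩
  | @cons p a w q r x he hpath ih =>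
    intro y hy
    have hq : q ∈ A.reach A.I (y ++ [a]) := by
      rw [reach_append]
      exact mem_dstep hy he
    obtain ⟨w', hw'⟩ := ih (y ++ [a]) hq
    have hstep : A.Estep R inv (A.mkState R inv y p) (A.mkState R inv (y ++ [a]) q) a
        (∑ s ∈ (A.mkState R inv y p).2.1,
          (A.mkState R inv y p).2.2 s * A.W s [a] (A.mkState R inv (y ++ [a]) q).2.1) :=
      ⟨y, p, q, hy, rfl, mem_dstep (Finset.mem_singleton_self p) he, rfl, rfl⟩
    exact ⟨_, by simpa using Path'.cons hstep hw'⟩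

end WFA

/-- **Proposition 3.** Every string accepted by a weighted automaton `A`
is accepted by the automaton `A'` produced by `R`-pre-disambiguation of `A`. -/
theorem predisambiguation_accepts {α S Q : Type}
    [DecidableEq Q] [DecidableEq α] [Semiring S]
    (A : WFA α S Q) (R : Q → Q → Prop) [DecidableRel R] (inv : S → S → S)
    (hAdm : A.Admissible R)
    (hwld : WFA.WeaklyLeftDivisible S) (hcanc : WFA.Cancellative S)
    (hinv : WFA.IsLeftDiv S inv)
    (hfin : Set.Finite {st : QP α S Q | A.IsState' R inv st})
    (x : List α) (hacc : ∃ i f : Q, i ∈ A.I ∧ f ∈ A.F ∧ A.PathTo i x f) :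
    ∃ q₀ ∈ A.I, ∃ (w : S) (st : QP α S Q),
      WFA.Path' A R inv (A.mkState R inv [] q₀) x w st ∧ st.1 ∈ A.F := by
  obtain ⟨i, f, hi, hf, hpath⟩ := hacc
  obtain ⟨w, hw⟩ := WFA.path'_of_pathTo (R := R) (inv := inv) hpath [] hi
  exact ⟨i, hi, w, A.mkState R inv ([] ++ x) f, hw, hf⟩
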